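/- QPTL satisfiability reduces to HyperCTL model checking over a fixed two-state Kripke structure: a closed QPTL formula φ in prenex normal form is satisfiable iff K ⊨ T₁(ψ), where K is the two-state fully connected Kripke structure with L(s₀)=∅, L(s₁)={p}, ψ is obtained from φ by replacing every atomic proposition q by ○q, and T recursively replaces each quantifier ∃t (resp. ¬∃t) by ∃π_m (resp. ¬∃π_m) and each occurrence of t by p_{π_m}. -/

import Mathlib

/-- A Kripke structure. -/
structure Kripke (S AP : Type) where
  init : S
  trans : S → Set S
  label : S → Set AP

/-- Paths of a Kripke structure from a state `s`: infinite sequences of labeled states. -/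
def PathsFrom {S AP : Type} (K : Kripke S AP) (s : S) : Set (ℕ → S × Set AP) :=
  {π | (π 0).1 = s ∧ (∀ i, (π (i+1)).1 ∈ K.trans (π i).1) ∧ ∀ i, (π i).2 = K.label (π i).1}

/-- HyperCTL formulas; atomic propositions are indexed by the (de Bruijn level) index
of the path variable in the current path tuple. -/
inductive HFormula (AP : Type) : Type
  | atom : AP → ℕ → HFormula AP
  | neg  : HFormula AP → HFormula AP
  | or   : HFormula AP → HFormula AP → HFormula AP
  | next : HFormula AP → HFormula AP
  | until_ : HFormula AP → HFormula AP → HFormula AP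
  | exists_ : HFormula AP → HFormula AP

/-- Shifting a path tuple: `shiftA Γ i` is `Γ[i,∞]`. -/
def shiftA {S AP : Type} (Γ : List (ℕ → S × Set AP)) (i : ℕ) : List (ℕ → S × Set AP) :=
  Γ.map (fun π n => π (n + i))

/-- The state where newly quantified paths start: the first state of the last path of the
tuple, or the initial state if the tuple is empty. -/
def startOf {S AP : Type} (K : Kripke S AP) (Γ : List (ℕ → S × Set AP)) : S :=
  match Γ.getLast? with
  | some π => (π 0).1
  | none => K.init

/-- Satisfaction relation of HyperCTL. -/
def sat {S AP : Type} (K : Kripke S AP) : List (ℕ → S × Set AP) → HFormula AP → Prop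
  | Γ, .atom a k => ∃ π, Γ[k]? = some π ∧ a ∈ (π 0).2
  | Γ, .neg φ => ¬ sat K Γ φ
  | Γ, .or φ ψ => sat K Γ φ ∨ sat K Γ ψ
  | Γ, .next φ => sat K (shiftA Γ 1) φ
  | Γ, .until_ φ ψ => ∃ i, sat K (shiftA Γ i) ψ ∧ ∀ j < i, sat K (shiftA Γ j) φ
  | Γ, .exists_ φ => ∃ π ∈ PathsFrom K (startOf K Γ), sat K (Γ ++ [π]) φ

/-- QPTL formulas. -/
inductive QPTL (A : Type) : Type
  | atom : A → QPTL A
  | neg : QPTL A → QPTL A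
  | or : QPTL A → QPTL A → QPTL A
  | next : QPTL A → QPTL A
  | ev : QPTL A → QPTL A
  | exq : A → QPTL A → QPTL A

/-- QPTL satisfaction over infinite sequences in `(2^A)^ω`. -/
def qsat {A : Type} : (ℕ → Set A) → QPTL A → Prop
  | σ, .atom a => a ∈ σ 0
  | σ, .neg ψ => ¬ qsat σ ψ
  | σ, .or ψ ψ' => qsat σ ψ ∨ qsat σ ψ'
  | σ, .next ψ => qsat (fun n => σ (n+1)) ψ
  | σ, .ev ψ => ∃ i, qsat (fun n => σ (n+i)) ψ
  | σ, .exq p ψ => ∃ σ' : ℕ → Set A, (∀ i a, a ≠ p → (a ∈ σ' i ↔ a ∈ σ i)) ∧ qsat σ' ψ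

/-- Free propositions of a QPTL formula. -/
def freeProps {A : Type} : QPTL A → Set A
  | .atom a => {a}
  | .neg ψ => freeProps ψ
  | .or ψ ψ' => freeProps ψ ∪ freeProps ψ'
  | .next ψ => freeProps ψ
  | .ev ψ => freeProps ψ
  | .exq p ψ => freeProps ψ \ {p}

/-- Quantifier-free QPTL formulas. -/
inductive QFree {A : Type} : QPTL A → Prop
  | atom (a : A) : QFree (.atom a)
  | neg {ψ} : QFree ψ → QFree (.neg ψ)
  | or {ψ ψ'} : QFree ψ → QFree ψ' → QFree (.or ψ ψ')
  | next {ψ} : QFree ψ → QFree (.next ψ)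
  | ev {ψ} : QFree ψ → QFree (.ev ψ)

/-- Prenex normal form: a prefix of (possibly negated) existential quantifiers followed
by a quantifier-free matrix. -/
inductive Prenex {A : Type} : QPTL A → Prop
  | qf {ψ} : QFree ψ → Prenex ψ
  | ex {t ψ} : Prenex ψ → Prenex (.exq t ψ)
  | negex {t ψ} : Prenex ψ → Prenex (.neg (.exq t ψ))

/-- Replace every atomic proposition `q` by `○q` (the shift compensating the one-step
delay of path quantification). -/
def shiftQ {A : Type} : QPTL A → QPTL A
  | .atom a => .next (.atom a)
  | .neg ψ => .neg (shiftQ ψ)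
  | .or ψ ψ' => .or (shiftQ ψ) (shiftQ ψ')
  | .next ψ => .next (shiftQ ψ)
  | .ev ψ => .ev (shiftQ ψ)
  | .exq p ψ => .exq p (shiftQ ψ)

/-- The translation `T`: each quantifier `∃t` (resp. `¬∃t`) becomes a path quantifier
`∃π_m` (resp. `¬∃π_m`), and each occurrence of `t` becomes `p_{π_m}`.  `env` records the
path index assigned to each bound proposition, `m` is the next fresh path index, and
`◇ψ` is expressed as `true U ψ`. -/
def hT {A : Type} [DecidableEq A] (env : A → ℕ) (m : ℕ) : QPTL A → HFormula PUnit
  | .atom a => .atom PUnit.unit (env a)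
  | .neg ψ => .neg (hT env m ψ)
  | .or ψ ψ' => .or (hT env m ψ) (hT env m ψ')
  | .next ψ => .next (hT env m ψ)
  | .ev ψ => .until_ (.or (.atom PUnit.unit 0) (.neg (.atom PUnit.unit 0))) (hT env m ψ)
  | .exq t ψ => .exists_ (hT (fun a => if a = t then m else env a) (m+1) ψ)

/-- The fixed two-state fully connected Kripke structure over `AP = {p}` with
`L(s₀) = ∅` and `L(s₁) = {p}`. -/
def twoStateK : Kripke Bool PUnit where
  init := false
  trans := fun _ => Set.univ
  label := fun b => if b then {PUnit.unit} else ∅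

/-! ### Auxiliary material for the proof -/

/-- The main invariant: each free proposition `a` is tracked by the path at index
`env a` of the tuple `Γ`, shifted by one. -/
def InvP {A : Type} (env : A → ℕ) (Γ : List (ℕ → Bool × Set PUnit))
    (σ : ℕ → Set A) (s : Set A) : Prop :=
  ∀ a ∈ s, ∃ π, Γ[env a]? = some π ∧ ∀ n, (a ∈ σ n ↔ PUnit.unit ∈ (π (n+1)).2)

lemma InvP.mono {A : Type} {env : A → ℕ} {Γ σ} {s s' : Set A}
    (h : InvP env Γ σ s) (hs : s' ⊆ s) : InvP env Γ σ s' :=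
  fun a ha => h a (hs ha)

lemma InvP.shift {A : Type} {env : A → ℕ} {Γ : List (ℕ → Bool × Set PUnit)}
    {σ : ℕ → Set A} {s : Set A} (h : InvP env Γ σ s) (i : ℕ) :
    InvP env (shiftA Γ i) (fun n => σ (n + i)) s := by
  intro a ha
  obtain ⟨π, hπ, hmem⟩ := h a ha
  refine ⟨fun n => π (n + i), ?_, ?_⟩
  · simp [shiftA, List.getElem?_map, hπ]
  · intro n
    simpa [show n + 1 + i = n + i + 1 by omega] using hmem (n + i)

lemma sat_taut (Γ : List (ℕ → Bool × Set PUnit)) :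
    sat twoStateK Γ (.or (.atom PUnit.unit 0) (.neg (.atom PUnit.unit 0))) := by
  by_cases h : sat twoStateK Γ (.atom PUnit.unit 0)
  · exact Or.inl h
  · exact Or.inr h

/-- The matrix lemma: quantifier-free case. -/
lemma matrix_iff {A : Type} [DecidableEq A] {ψ : QPTL A} (hqf : QFree ψ) :
    ∀ (env : A → ℕ) (m : ℕ) (Γ : List (ℕ → Bool × Set PUnit)) (σ : ℕ → Set A),
      InvP env Γ σ (freeProps ψ) →
      (qsat σ ψ ↔ sat twoStateK Γ (hT env m (shiftQ ψ))) := by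
  induction hqf with
  | atom a =>
    intro env m Γ σ hInv
    obtain ⟨π, hπ, hmem⟩ := hInv a (by simp [freeProps])
    simp only [shiftQ, hT, sat, qsat, shiftA, List.getElem?_map, hπ, Option.map_some,
      Option.some.injEq]
    constructor
    · intro h
      exact ⟨_, rfl, by simpa using (hmem 0).mp h⟩
    · rintro ⟨π', h1, h2⟩
      subst h1
      exact (hmem 0).mpr (by simpa using h2)
  | neg hψ ih =>
    intro env m Γ σ hInv
    simp only [freeProps] at hInv
    simp only [shiftQ, hT, qsat, sat]
    exact not_congr (ih env m Γ σ hInv)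
  | or hψ hψ' ih ih' =>
    intro env m Γ σ hInv
    simp only [freeProps] at hInv
    simp only [shiftQ, hT, qsat, sat]
    exact or_congr (ih env m Γ σ (hInv.mono Set.subset_union_left))
      (ih' env m Γ σ (hInv.mono Set.subset_union_right))
  | next hψ ih =>
    intro env m Γ σ hInv
    simp only [freeProps] at hInv
    simp only [shiftQ, hT, qsat, sat]
    exact ih env m _ _ (hInv.shift 1)
  | ev hψ ih =>
    intro env m Γ σ hInv
    simp only [freeProps] at hInv
    simp only [shiftQ, hT, qsat, sat]
    constructor
    · rintro ⟨i, hi⟩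
      exact ⟨i, (ih env m _ _ (hInv.shift i)).mp hi, fun j _ => sat_taut _⟩
    · rintro ⟨i, hi, -⟩
      exact ⟨i, (ih env m _ _ (hInv.shift i)).mpr hi⟩

open scoped Classical in
/-- The state sequence of a path encoding the predicate `P`, shifted by one. -/
noncomputable def stOf (Γ : List (ℕ → Bool × Set PUnit)) (P : ℕ → Prop) : ℕ → Bool
  | 0 => startOf twoStateK Γ
  | n + 1 => if P n then true else false

/-- The path of `twoStateK` encoding the predicate `P` shifted by one. -/
noncomputable def pathOf (Γ : List (ℕ → Bool × Set PUnit)) (P : ℕ → Prop) :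
    ℕ → Bool × Set PUnit :=
  fun n => (stOf Γ P n, twoStateK.label (stOf Γ P n))

lemma pathOf_mem (Γ : List (ℕ → Bool × Set PUnit)) (P : ℕ → Prop) :
    pathOf Γ P ∈ PathsFrom twoStateK (startOf twoStateK Γ) :=
  ⟨rfl, fun _ => Set.mem_univ _, fun _ => rfl⟩

lemma pathOf_snd (Γ : List (ℕ → Bool × Set PUnit)) (P : ℕ → Prop) (n : ℕ) :
    PUnit.unit ∈ ((pathOf Γ P) (n + 1)).2 ↔ P n := by
  by_cases h : P n <;> simp [pathOf, stOf, twoStateK, h]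

/-- The quantifier step. -/
lemma exq_iff {A : Type} [DecidableEq A] {ψ : QPTL A} (t : A)
    (ih : ∀ (env : A → ℕ) (m : ℕ) (Γ : List (ℕ → Bool × Set PUnit)) (σ : ℕ → Set A),
      Γ.length = m → InvP env Γ σ (freeProps ψ) →
      (qsat σ ψ ↔ sat twoStateK Γ (hT env m (shiftQ ψ))))
    (env : A → ℕ) (m : ℕ) (Γ : List (ℕ → Bool × Set PUnit)) (σ : ℕ → Set A)
    (hm : Γ.length = m) (hInv : InvP env Γ σ (freeProps (QPTL.exq t ψ))) :
    qsat σ (.exq t ψ) ↔ sat twoStateK Γ (hT env m (shiftQ (.exq t ψ))) := by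
  simp only [freeProps] at hInv
  simp only [shiftQ, hT, qsat, sat]
  constructor
  · rintro ⟨σ', hagree, hq⟩
    refine ⟨pathOf Γ (fun n => t ∈ σ' n), pathOf_mem _ _, ?_⟩
    refine (ih _ (m + 1) (Γ ++ [pathOf Γ (fun n => t ∈ σ' n)]) σ' (by simp [hm]) ?_).mp hq
    intro a ha
    by_cases hat : a = t
    · subst hat
      refine ⟨pathOf Γ (fun n => a ∈ σ' n), ?_, fun n => by simpa using (pathOf_snd Γ (fun k => a ∈ σ' k) n).symm⟩
      simp [← hm, List.getElem?_concat_length]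
    · obtain ⟨πa, hπa, hmema⟩ := hInv a ⟨ha, hat⟩
      have hlt : env a < Γ.length := (List.getElem?_eq_some_iff.mp hπa).1
      refine ⟨πa, ?_, fun n => (hagree n a hat).trans (hmema n)⟩
      simp [hat, List.getElem?_append, hlt, hπa, (List.getElem?_eq_some_iff.mp hπa).2]
  · rintro ⟨π, hπpaths, hs⟩
    refine ⟨fun n => {a | if a = t then PUnit.unit ∈ (π (n + 1)).2 else a ∈ σ n},
      fun i a hat => by simp [hat], ?_⟩
    refine (ih _ (m + 1) (Γ ++ [π]) _ (by simp [hm]) ?_).mpr hs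
    intro a ha
    by_cases hat : a = t
    · subst hat
      refine ⟨π, ?_, fun n => by simp⟩
      simp [← hm, List.getElem?_concat_length]
    · obtain ⟨πa, hπa, hmema⟩ := hInv a ⟨ha, hat⟩
      have hlt : env a < Γ.length := (List.getElem?_eq_some_iff.mp hπa).1
      refine ⟨πa, ?_, fun n => ?_⟩
      · simp [hat, List.getElem?_append, hlt, hπa, (List.getElem?_eq_some_iff.mp hπa).2]
      · simp only [Set.mem_setOf_eq, if_neg hat]
        exact hmema n

/-- The prenex lemma. -/
lemma prenex_iff {A : Type} [DecidableEq A] {φ : QPTL A} (hpre : Prenex φ) :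
    ∀ (env : A → ℕ) (m : ℕ) (Γ : List (ℕ → Bool × Set PUnit)) (σ : ℕ → Set A),
      Γ.length = m → InvP env Γ σ (freeProps φ) →
      (qsat σ φ ↔ sat twoStateK Γ (hT env m (shiftQ φ))) := by
  induction hpre with
  | qf h =>
    intro env m Γ σ _ hInv
    exact matrix_iff h env m Γ σ hInv
  | ex hψ ih =>
    exact fun env m Γ σ hm hInv => exq_iff _ ih env m Γ σ hm hInv
  | negex hψ ih =>
    intro env m Γ σ hm hInv
    have h := exq_iff _ ih env m Γ σ hm (by simpa [freeProps] using hInv)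
    simp only [shiftQ, hT, qsat, sat] at h ⊢
    exact not_congr h

/-- QPTL satisfiability reduces to HyperCTL model checking over the fixed
two-state Kripke structure: a closed prenex QPTL formula `φ` is satisfiable iff
`K ⊨ T₁(ψ)`, where `ψ` is `φ` with every atom shifted by `○`. -/
theorem qptl_sat_iff_modelcheck {A : Type} [DecidableEq A] (φ : QPTL A)
    (hpre : Prenex φ) (hclosed : freeProps φ = ∅) :
    (∃ σ : ℕ → Set A, qsat σ φ) ↔
      sat twoStateK [] (hT (fun _ => 0) 0 (shiftQ φ)) := by
  have key : ∀ σ : ℕ → Set A,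
      qsat σ φ ↔ sat twoStateK [] (hT (fun _ => 0) 0 (shiftQ φ)) := by
    intro σ
    refine prenex_iff hpre (fun _ => 0) 0 [] σ rfl ?_
    rw [hclosed]
    rintro a ⟨⟩
  constructor
  · rintro ⟨σ, hσ⟩
    exact (key σ).mp hσ
  · intro h
    exact ⟨fun _ => ∅, (key _).mpr h⟩
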